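/- arXiv:math/0212201 — 3 statements merged into one kernel-verified Lean document; each statement's English description precedes it below -/
import Mathlib

section
/- Let p ≥ 2, β > 0, h > 0, and define φ_p(x) = E[tanh²(β·(p/2)^{1/2}·x^{(p−1)/2}·Y + h)] for x ∈ [0,1], where Y is a standard Gaussian. If β²·p(p−1)/2 < 1 (in particular if 8p²β²·exp(16β²p) ≤ 1/2), then the equation q = φ_p(q) has a unique solution q in [0,1]. -/
/-! The derivative of `tanh²` is `2`-Lipschitz, so `g b = tanh² (b + h) + tanh² (-b + h)` is even
with `|g' b| ≤ 4 |b|`, hence `|g b - g c| ≤ 2 |b² - c²|`. As `Y` and `-Y` have the same law,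
`E tanh² (a Y + h) = E g (a Y) / 2`, and therefore
`|E tanh² (a Y + h) - E tanh² (c Y + h)| ≤ |a² - c²| E Y² = |a² - c²|`.
With `a² = β² (p / 2) q ^ (p - 1)` this makes `φ_p` Lipschitz on `[0, 1]` with constant
`β² p (p - 1) / 2 < 1`; since `φ_p` maps `[0, 1]` into itself, Banach's fixed point theorem
applies. -/

open MeasureTheory ProbabilityTheory Real Set
open scoped NNReal

theorem Real.hasDerivAt_tanh (x : ℝ) : HasDerivAt tanh (1 - tanh x ^ 2) x := by
  rw [tanh_eq_sinh_div_cosh x, funext tanh_eq_sinh_div_cosh]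
  refine ((hasDerivAt_sinh x).div (hasDerivAt_cosh x) (cosh_pos x).ne').congr_deriv ?_
  field_simp

theorem hasDerivAt_tanh_sq (x : ℝ) :
    HasDerivAt (fun x => tanh x ^ 2) (2 * (tanh x - tanh x ^ 3)) x := by
  refine ((hasDerivAt_tanh x).pow 2).congr_deriv ?_
  ring

theorem lipschitzWith_two_mul_tanh_sub_tanh_pow_three :
    LipschitzWith 2 (fun x => 2 * (tanh x - tanh x ^ 3)) := by
  have hderiv (x : ℝ) : HasDerivAt (fun x => 2 * (tanh x - tanh x ^ 3))
      (2 * ((1 - tanh x ^ 2) * (1 - 3 * tanh x ^ 2))) x := by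
    refine (((hasDerivAt_tanh x).sub ((hasDerivAt_tanh x).pow 3)).const_mul 2).congr_deriv ?_
    ring
  refine lipschitzWith_of_nnnorm_deriv_le (fun x => (hderiv x).differentiableAt) fun x => ?_
  rw [(hderiv x).deriv, ← NNReal.coe_le_coe, coe_nnnorm, Real.norm_eq_abs, abs_le]
  push_cast
  constructor <;> nlinarith [tanh_sq_lt_one x, sq_nonneg (tanh x)]

theorem abs_sub_le_mul_sq_sub_sq_of_abs_deriv_le {g g' : ℝ → ℝ} {C : ℝ}
    (hg : ∀ x, HasDerivAt g (g' x) x) (hg' : ∀ x, 0 ≤ x → |g' x| ≤ 2 * C * x) {b c : ℝ}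
    (hc : 0 ≤ c) (hcb : c ≤ b) :
    |g b - g c| ≤ C * (b ^ 2 - c ^ 2) := by
  have hB (x : ℝ) : HasDerivAt (fun x => C * (x ^ 2 - c ^ 2)) (2 * C * x) x :=
    (((hasDerivAt_pow 2 x).sub_const (c ^ 2)).const_mul C).congr_deriv (by ring)
  refine image_norm_le_of_norm_deriv_right_le_deriv_boundary (f := fun x => g x - g c)
    (fun x _ => ((hg x).continuousAt.sub continuousAt_const).continuousWithinAt)
    (fun x _ => ((hg x).sub_const (g c)).hasDerivWithinAt) (by simp) hB
    (fun x hx => hg' x (hc.trans hx.1)) ⟨hcb, le_rfl⟩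

theorem abs_sub_le_mul_abs_sq_sub_sq_of_even {g g' : ℝ → ℝ} {C : ℝ}
    (hg : ∀ x, HasDerivAt g (g' x) x) (heven : ∀ x, g (-x) = g x)
    (hg' : ∀ x, 0 ≤ x → |g' x| ≤ 2 * C * x) (b c : ℝ) :
    |g b - g c| ≤ C * |b ^ 2 - c ^ 2| := by
  have habs (x : ℝ) : g x = g |x| := by
    rcases abs_choice x with h | h <;> rw [h]; exact (heven x).symm
  wlog hcb : |c| ≤ |b| generalizing b c
  · rw [abs_sub_comm, abs_sub_comm (b ^ 2)]
    exact this c b (le_of_not_ge hcb)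
  have hsq : c ^ 2 ≤ b ^ 2 := sq_le_sq.mpr hcb
  rw [habs b, habs c, abs_of_nonneg (sub_nonneg.mpr hsq), ← sq_abs b, ← sq_abs c]
  exact abs_sub_le_mul_sq_sub_sq_of_abs_deriv_le hg hg' (abs_nonneg c) hcb

theorem integral_comp_neg_gaussianReal (v : ℝ≥0) (f : ℝ → ℝ) :
    ∫ y, f (-y) ∂gaussianReal 0 v = ∫ y, f y ∂gaussianReal 0 v := by
  conv_rhs => rw [← neg_zero, ← gaussianReal_map_neg]
  exact (integral_map_equiv (MeasurableEquiv.neg ℝ) f).symm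

theorem integrable_sq_gaussianReal (μ : ℝ) (v : ℝ≥0) :
    Integrable (fun y => y ^ 2) (gaussianReal μ v) :=
  (memLp_id_gaussianReal 2).integrable_sq

theorem integral_sq_gaussianReal_zero (v : ℝ≥0) : ∫ y, y ^ 2 ∂gaussianReal 0 v = v := by
  rw [← variance_fun_id_gaussianReal (μ := 0), variance_eq_integral measurable_id'.aemeasurable]
  simp

theorem integral_gaussianReal_eq_half_integral_add_comp_neg (v : ℝ≥0) {F : ℝ → ℝ}
    (hF : Integrable F (gaussianReal 0 v)) :
    ∫ y, F y ∂gaussianReal 0 v = (∫ y, (F y + F (-y)) ∂gaussianReal 0 v) / 2 := by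
  have hneg : Integrable (fun y => F (-y)) (gaussianReal 0 v) := by
    rw [← neg_zero, ← gaussianReal_map_neg] at hF
    exact (integrable_map_equiv (MeasurableEquiv.neg ℝ) F).mp hF
  rw [integral_add hF hneg, integral_comp_neg_gaussianReal]
  ring

theorem abs_integral_comp_mul_add_sub_le {f f' : ℝ → ℝ} {M : ℝ≥0} {B : ℝ}
    (hf : ∀ x, HasDerivAt f (f' x) x) (hf' : LipschitzWith M f') (hB : ∀ x, |f x| ≤ B)
    (v : ℝ≥0) (h a c : ℝ) :
    |∫ y, f (a * y + h) ∂gaussianReal 0 v - ∫ y, f (c * y + h) ∂gaussianReal 0 v|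
      ≤ M / 2 * v * |a ^ 2 - c ^ 2| := by
  set γ := gaussianReal 0 v
  have hcont : Continuous f := continuous_iff_continuousAt.mpr fun x => (hf x).continuousAt
  have hint (a : ℝ) : Integrable (fun y => f (a * y + h)) γ :=
    Integrable.of_bound (by fun_prop) B (ae_of_all _ fun y => hB _)
  set g : ℝ → ℝ := fun b => f (b + h) + f (-b + h)
  have hg (b : ℝ) : HasDerivAt g (f' (b + h) - f' (-b + h)) b :=
    (((hf _).comp b ((hasDerivAt_id b).add_const h)).add
      ((hf _).comp b ((hasDerivAt_neg b).add_const h))).congr_deriv (by simp [sub_eq_add_neg])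
  have hgeven (b : ℝ) : g (-b) = g b := by simp only [g, neg_neg, add_comm]
  have hg' (b : ℝ) (hb : 0 ≤ b) : |f' (b + h) - f' (-b + h)| ≤ 2 * M * b := by
    calc |f' (b + h) - f' (-b + h)| ≤ M * |b + h - (-b + h)| := by
          simpa only [dist_eq_norm, Real.norm_eq_abs] using hf'.dist_le_mul (b + h) (-b + h)
      _ = 2 * M * b := by
        rw [show b + h - (-b + h) = 2 * b by ring, abs_of_nonneg (by positivity)]
        ring
  have hhalf (a : ℝ) : ∫ y, f (a * y + h) ∂γ = (∫ y, g (a * y) ∂γ) / 2 := by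
    rw [integral_gaussianReal_eq_half_integral_add_comp_neg v (hint a)]
    simp only [g, mul_neg]
    rfl
  have hgint (a : ℝ) : Integrable (fun y => g (a * y)) γ := by
    refine ((hint a).add (hint (-a))).congr (ae_of_all _ fun y => ?_)
    simp only [g, Pi.add_apply, neg_mul]
  have hpoint (y : ℝ) : |g (a * y) - g (c * y)| ≤ M * |a ^ 2 - c ^ 2| * y ^ 2 := by
    calc |g (a * y) - g (c * y)| ≤ M * |(a * y) ^ 2 - (c * y) ^ 2| :=
          abs_sub_le_mul_abs_sq_sub_sq_of_even hg hgeven hg' _ _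
      _ = M * |a ^ 2 - c ^ 2| * y ^ 2 := by
        rw [show (a * y) ^ 2 - (c * y) ^ 2 = (a ^ 2 - c ^ 2) * y ^ 2 by ring, abs_mul,
          abs_of_nonneg (sq_nonneg y), mul_assoc]
  calc |∫ y, f (a * y + h) ∂γ - ∫ y, f (c * y + h) ∂γ|
      = |∫ y, (g (a * y) - g (c * y)) ∂γ| / 2 := by
        rw [hhalf, hhalf, integral_sub (hgint a) (hgint c), ← sub_div, abs_div, abs_two]
    _ ≤ (∫ y, M * |a ^ 2 - c ^ 2| * y ^ 2 ∂γ) / 2 := by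
        gcongr
        exact (abs_integral_le_integral_abs).trans (integral_mono ((hgint a).sub (hgint c)).abs
          ((integrable_sq_gaussianReal 0 v).const_mul _) hpoint)
    _ = M / 2 * v * |a ^ 2 - c ^ 2| := by
        rw [integral_const_mul, integral_sq_gaussianReal_zero]
        ring

theorem existsUnique_eq_of_lipschitzOnWith {α : Type*} [MetricSpace α] {f : α → α}
    {s : Set α} {K : ℝ≥0} (hK : K < 1) (hsc : IsComplete s) (hne : s.Nonempty)
    (hsf : MapsTo f s s) (hf : LipschitzOnWith K f s) : ∃! x, x ∈ s ∧ x = f x := by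
  obtain ⟨x, hx⟩ := hne
  have hcontr : ContractingWith K (hsf.restrict f s s) := ⟨hK, hf.mapsToRestrict hsf⟩
  obtain ⟨y, hys, hfy, -⟩ := hcontr.exists_fixedPoint' hsc hsf hx (edist_ne_top _ _)
  refine ⟨y, ⟨hys, hfy.symm⟩, fun z ⟨hzs, hfz⟩ => ?_⟩
  have hzy := hf.dist_le_mul z hzs y hys
  rw [← hfz, hfy] at hzy
  have hK' : (K : ℝ) < 1 := hK
  exact dist_le_zero.mp <| by nlinarith [dist_nonneg (x := z) (y := y)]

theorem abs_pow_sub_pow_le_of_mem_Icc {x y : ℝ} (hx : x ∈ Icc (0 : ℝ) 1)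
    (hy : y ∈ Icc (0 : ℝ) 1) (n : ℕ) : |x ^ n - y ^ n| ≤ n * |x - y| := by
  have hmax : max |x| |y| ^ (n - 1) ≤ 1 := by
    refine pow_le_one₀ (le_max_of_le_left (abs_nonneg x)) (max_le ?_ ?_) <;>
      rw [abs_le] <;> constructor <;> linarith [hx.1, hx.2, hy.1, hy.2]
  calc |x ^ n - y ^ n| ≤ |x - y| * n * max |x| |y| ^ (n - 1) := abs_pow_sub_pow_le ..
    _ ≤ |x - y| * n * 1 := by gcongr
    _ = n * |x - y| := by ring

noncomputable def overlapCoeff (p : ℕ) (β q : ℝ) : ℝ :=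
  β * √((p : ℝ) / 2) * q ^ (((p : ℝ) - 1) / 2)

/-- The map `φ_p` of the paper. -/
noncomputable def overlapMap (p : ℕ) (β h q : ℝ) : ℝ :=
  ∫ y, tanh (overlapCoeff p β q * y + h) ^ 2 ∂gaussianReal 0 1

theorem overlapMap_mem_Icc (p : ℕ) (β h q : ℝ) : overlapMap p β h q ∈ Icc 0 1 := by
  refine ⟨integral_nonneg fun y => sq_nonneg _, ?_⟩
  calc overlapMap p β h q ≤ ∫ _, (1 : ℝ) ∂gaussianReal 0 1 :=
        integral_mono_of_nonneg (ae_of_all _ fun y => sq_nonneg _) (integrable_const 1)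
          (ae_of_all _ fun y => (tanh_sq_lt_one _).le)
    _ = 1 := by simp

theorem sq_overlapCoeff {p : ℕ} (hp : 1 ≤ p) (β : ℝ) {q : ℝ} (hq : 0 ≤ q) :
    overlapCoeff p β q ^ 2 = β ^ 2 * ((p : ℝ) / 2) * q ^ (p - 1) := by
  rw [overlapCoeff, mul_pow, mul_pow, sq_sqrt (by positivity), ← rpow_natCast (q ^ _),
    ← rpow_mul hq, ← rpow_natCast q, Nat.cast_sub hp]
  norm_num

theorem abs_overlapMap_sub_le {p : ℕ} (hp : 1 ≤ p) (β h : ℝ) {q q' : ℝ}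
    (hq : q ∈ Icc (0 : ℝ) 1) (hq' : q' ∈ Icc (0 : ℝ) 1) :
    |overlapMap p β h q - overlapMap p β h q'|
      ≤ β ^ 2 * p * ((p : ℝ) - 1) / 2 * |q - q'| := by
  have htanh (x : ℝ) : |tanh x ^ 2| ≤ 1 := by
    rw [abs_sq]
    exact (tanh_sq_lt_one x).le
  calc |overlapMap p β h q - overlapMap p β h q'|
      ≤ |overlapCoeff p β q ^ 2 - overlapCoeff p β q' ^ 2| :=
        (abs_integral_comp_mul_add_sub_le hasDerivAt_tanh_sq
          lipschitzWith_two_mul_tanh_sub_tanh_pow_three htanh 1 h _ _).trans_eq (by norm_num)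
    _ = β ^ 2 * ((p : ℝ) / 2) * |q ^ (p - 1) - q' ^ (p - 1)| := by
        rw [sq_overlapCoeff hp β hq.1, sq_overlapCoeff hp β hq'.1, ← mul_sub, abs_mul,
          abs_of_nonneg (by positivity)]
    _ ≤ β ^ 2 * ((p : ℝ) / 2) * ((p - 1 : ℕ) * |q - q'|) := by
        gcongr
        exact abs_pow_sub_pow_le_of_mem_Icc hq hq' _
    _ = β ^ 2 * p * ((p : ℝ) - 1) / 2 * |q - q'| := by
        rw [Nat.cast_sub hp]
        push_cast
        ring

theorem stmt_5_general (p : ℕ) (hp : 2 ≤ p) (β h : ℝ)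
    (hH : β ^ 2 * p * ((p : ℝ) - 1) / 2 < 1) :
    ∃! q : ℝ, q ∈ Set.Icc (0 : ℝ) 1 ∧
      q = ∫ y, Real.tanh (β * Real.sqrt ((p : ℝ) / 2) * q ^ (((p : ℝ) - 1) / 2) * y + h) ^ 2
            ∂(gaussianReal 0 1) := by
  have hp1 : 1 ≤ p := by omega
  have hLip : LipschitzOnWith (β ^ 2 * p * ((p : ℝ) - 1) / 2).toNNReal (overlapMap p β h)
      (Icc 0 1) :=
    LipschitzOnWith.of_dist_le' fun q hq q' hq' => abs_overlapMap_sub_le hp1 β h hq hq'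
  exact existsUnique_eq_of_lipschitzOnWith (Real.toNNReal_lt_one.mpr hH)
    isClosed_Icc.isComplete (nonempty_Icc.mpr zero_le_one)
    (fun q _ => overlapMap_mem_Icc p β h q) hLip

theorem stmt_5 (p : ℕ) (hp : 2 ≤ p) (β h : ℝ) (hβ : 0 < β) (hh : 0 < h)
    (hH : β ^ 2 * p * ((p : ℝ) - 1) / 2 < 1) :
    ∃! q : ℝ, q ∈ Set.Icc (0 : ℝ) 1 ∧
      q = ∫ y, Real.tanh (β * Real.sqrt ((p : ℝ) / 2) * q ^ (((p : ℝ) - 1) / 2) * y + h) ^ 2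
            ∂(gaussianReal 0 1) :=
  stmt_5_general p hp β h hH
end

section
/- Let m ≥ 1, q ∈ (0,1], and X a random variable with |X| ≤ 1. Then |E[X − q]| ≤ (1/(m q^{m−1}))·|E[X^m − q^m]| + ((m−1)/(2 q^{m−1}))·E[(X − q)²]. -/
open MeasureTheory

lemma ptwise (m : ℕ) (hm : 1 ≤ m) (x q : ℝ) (hx : |x| ≤ 1) (hq : 0 ≤ q) (hq1 : q ≤ 1) :
    |x ^ m - q ^ m - (m : ℝ) * q ^ (m - 1) * (x - q)| ≤ ((m : ℝ) * ((m : ℝ) - 1) / 2) * (x - q) ^ 2 := by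
  have hqabs : |q| ≤ 1 := by rw [abs_of_nonneg hq]; exact hq1
  induction m, hm using Nat.le_induction with
  | base => simp
  | succ n hn ih =>
    obtain ⟨k, rfl⟩ : ∃ k, n = k + 1 := ⟨n - 1, by omega⟩
    have hpow : |q ^ k| ≤ 1 := by
      rw [abs_pow]; exact pow_le_one₀ (abs_nonneg q) hqabs
    have key : x ^ (k + 1 + 1) - q ^ (k + 1 + 1) - ((k + 1 + 1 : ℕ) : ℝ) * q ^ (k + 1 + 1 - 1) * (x - q)
        = x * (x ^ (k + 1) - q ^ (k + 1) - ((k + 1 : ℕ) : ℝ) * q ^ (k + 1 - 1) * (x - q))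
          + ((k + 1 : ℕ) : ℝ) * q ^ k * (x - q) ^ 2 := by
      push_cast
      ring
    rw [key]
    have hn1 : (0 : ℝ) ≤ ((k + 1 : ℕ) : ℝ) := by positivity
    calc |x * (x ^ (k + 1) - q ^ (k + 1) - ((k + 1 : ℕ) : ℝ) * q ^ (k + 1 - 1) * (x - q))
          + ((k + 1 : ℕ) : ℝ) * q ^ k * (x - q) ^ 2|
        ≤ |x| * |x ^ (k + 1) - q ^ (k + 1) - ((k + 1 : ℕ) : ℝ) * q ^ (k + 1 - 1) * (x - q)|
          + ((k + 1 : ℕ) : ℝ) * |q ^ k| * (x - q) ^ 2 := by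
          refine (abs_add_le _ _).trans ?_
          rw [abs_mul]
          gcongr
          rw [abs_mul, abs_mul, Nat.abs_cast, abs_sq]
      _ ≤ 1 * (((k + 1 : ℕ) : ℝ) * (((k + 1 : ℕ) : ℝ) - 1) / 2 * (x - q) ^ 2)
          + ((k + 1 : ℕ) : ℝ) * 1 * (x - q) ^ 2 := by
          gcongr
      _ = ((k + 1 + 1 : ℕ) : ℝ) * (((k + 1 + 1 : ℕ) : ℝ) - 1) / 2 * (x - q) ^ 2 := by
          push_cast; ring


theorem stmt_14 (m : ℕ) (hm : 1 ≤ m) (q : ℝ) (hq0 : 0 < q) (hq1 : q ≤ 1)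
    {Ω : Type} [MeasurableSpace Ω] (μ : Measure Ω) [IsProbabilityMeasure μ]
    (X : Ω → ℝ) (hX : Measurable X) (hXb : ∀ ω, |X ω| ≤ 1) :
    |∫ ω, (X ω - q) ∂μ| ≤
      (1 / (m * q ^ (m - 1))) * |∫ ω, ((X ω) ^ m - q ^ m) ∂μ|
      + (((m : ℝ) - 1) / (2 * q ^ (m - 1))) * ∫ ω, (X ω - q) ^ 2 ∂μ := by
  set c : ℝ := (m : ℝ) * q ^ (m - 1) with hc
  have hc0 : 0 < c := by
    apply mul_pos _ (pow_pos hq0 _)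
    exact_mod_cast hm
  -- integrability
  have hint : ∀ (f : Ω → ℝ), Measurable f → (∀ ω, |f ω| ≤ (4:ℝ)) → Integrable f μ := by
    intro f hf hb
    exact (integrable_const ((4:ℝ))).mono' hf.aestronglyMeasurable
      (Filter.Eventually.of_forall hb)
  have hXq : Integrable (fun ω => X ω - q) μ := by
    refine hint _ (by fun_prop) fun ω => ?_
    have := hXb ω
    have : |X ω - q| ≤ |X ω| + |q| := abs_sub _ _
    have hq2 : |q| ≤ 1 := by rw [abs_of_nonneg hq0.le]; exact hq1
    have hmn : (1:ℝ) ≤ (m:ℝ) := by exact_mod_cast hm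
    linarith [hXb ω]
  have hXm : Integrable (fun ω => (X ω) ^ m - q ^ m) μ := by
    refine hint _ (by fun_prop) fun ω => ?_
    have h1 : |(X ω) ^ m| ≤ 1 := by
      rw [abs_pow]; exact pow_le_one₀ (abs_nonneg _) (hXb ω)
    have h2 : |q ^ m| ≤ 1 := by
      rw [abs_pow, abs_of_nonneg hq0.le]; exact pow_le_one₀ hq0.le hq1
    have hmn : (1:ℝ) ≤ (m:ℝ) := by exact_mod_cast hm
    have := abs_sub ((X ω) ^ m) (q ^ m)
    linarith
  have hsq : Integrable (fun ω => (X ω - q) ^ 2) μ := by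
    refine hint _ (by fun_prop) fun ω => ?_
    have hq2 : |q| ≤ 1 := by rw [abs_of_nonneg hq0.le]; exact hq1
    have hmn : (1:ℝ) ≤ (m:ℝ) := by exact_mod_cast hm
    have h1 : |X ω - q| ≤ 2 := (abs_sub _ _).trans (by linarith [hXb ω])
    rw [abs_pow]
    calc |X ω - q| ^ 2 ≤ 2 ^ 2 := by gcongr
      _ ≤ 4 := by norm_num
  have herr : Integrable (fun ω => (X ω) ^ m - q ^ m - c * (X ω - q)) μ :=
    hXm.sub (hXq.const_mul c)
  -- pointwise bound
  have hpt : ∀ ω, |(X ω) ^ m - q ^ m - c * (X ω - q)|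
      ≤ ((m : ℝ) * ((m : ℝ) - 1) / 2) * (X ω - q) ^ 2 := by
    intro ω
    have := ptwise m hm (X ω) q (hXb ω) hq0.le hq1
    rw [hc]; convert this using 3
  -- the decomposition of the integral
  have hdecomp : c * ∫ ω, (X ω - q) ∂μ
      = (∫ ω, ((X ω) ^ m - q ^ m) ∂μ) - ∫ ω, ((X ω) ^ m - q ^ m - c * (X ω - q)) ∂μ := by
    rw [← integral_sub hXm herr, ← integral_const_mul]
    congr 1; funext ω; ring
  have herr_bound : |∫ ω, ((X ω) ^ m - q ^ m - c * (X ω - q)) ∂μ|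
      ≤ ((m : ℝ) * ((m : ℝ) - 1) / 2) * ∫ ω, (X ω - q) ^ 2 ∂μ := by
    calc |∫ ω, ((X ω) ^ m - q ^ m - c * (X ω - q)) ∂μ|
        ≤ ∫ ω, |(X ω) ^ m - q ^ m - c * (X ω - q)| ∂μ := by simpa [Real.norm_eq_abs] using norm_integral_le_integral_norm (fun ω => (X ω) ^ m - q ^ m - c * (X ω - q))
      _ ≤ ∫ ω, ((m : ℝ) * ((m : ℝ) - 1) / 2) * (X ω - q) ^ 2 ∂μ := by
          exact integral_mono herr.abs (hsq.const_mul _) hpt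
      _ = ((m : ℝ) * ((m : ℝ) - 1) / 2) * ∫ ω, (X ω - q) ^ 2 ∂μ := integral_const_mul _ _
  have key : |∫ ω, (X ω - q) ∂μ|
      ≤ (1 / c) * |∫ ω, ((X ω) ^ m - q ^ m) ∂μ|
        + (1 / c) * (((m : ℝ) * ((m : ℝ) - 1) / 2) * ∫ ω, (X ω - q) ^ 2 ∂μ) := by
    have h1 : |∫ ω, (X ω - q) ∂μ| = (1 / c) * |c * ∫ ω, (X ω - q) ∂μ| := by
      rw [abs_mul, abs_of_pos hc0]; field_simp
    rw [h1, hdecomp]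
    have h2 : (0:ℝ) ≤ 1 / c := by positivity
    have h3 : |(∫ ω, ((X ω) ^ m - q ^ m) ∂μ) - ∫ ω, ((X ω) ^ m - q ^ m - c * (X ω - q)) ∂μ|
        ≤ |∫ ω, ((X ω) ^ m - q ^ m) ∂μ| + ((m : ℝ) * ((m : ℝ) - 1) / 2) * ∫ ω, (X ω - q) ^ 2 ∂μ :=
      (abs_sub _ _).trans (by linarith [herr_bound])
    have h4 := mul_le_mul_of_nonneg_left h3 h2
    linarith
  refine key.trans (le_of_eq ?_)
  congr 1
  rw [hc]
  have hq' : q ^ (m - 1) ≠ 0 := (pow_pos hq0 _).ne'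
  have hm' : (m : ℝ) ≠ 0 := by positivity
  field_simp
end

section
/- Let q ∈ [0,1], β > 0, h > 0, p ≥ 2, and define F(β,h,q,p) = (β²/4)[1 − p·q^{p−1} + (p−1)·q^p] + log 2 + E[log cosh(β(p/2)^{1/2} q^{(p−1)/2} Y + h)], where Y is standard Gaussian. If q satisfies q = E[tanh²(β(p/2)^{1/2} q^{(p−1)/2} Y + h)], then ∂F/∂q(β,h,q,p) = 0. -/
/-!
Write the random part of `F` as `Φ(c q^e)` with `Φ(t) = E[log cosh(tY + h)]`, `c = β √(p/2)` and
`e = (p-1)/2`. Differentiating under the expectation gives `Φ'(t) = E[Y tanh(tY + h)]`, and Gaussian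
integration by parts (Stein's lemma, `E[Y f(Y)] = E[f'(Y)]`) turns this into
`t (1 - E[tanh²(tY + h)])`. At a fixed point this is `c q^e (1 - q)`, so by the chain rule the random
part contributes `c² e q^(2e-1) (1 - q) = β² p (p-1)/4 · q^(p-2) (1 - q)`, which is exactly minus the
derivative of the polynomial part.
-/

open MeasureTheory ProbabilityTheory Real Filter
open scoped NNReal

namespace Real

theorem hasDerivAt_tanh_s17 (x : ℝ) : HasDerivAt tanh (1 - tanh x ^ 2) x := by
  have h := (hasDerivAt_sinh x).div (hasDerivAt_cosh x) (cosh_pos x).ne'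
  rw [show sinh / cosh = tanh from funext fun y => (tanh_eq_sinh_div_cosh y).symm] at h
  refine h.congr_deriv ?_
  rw [tanh_eq_sinh_div_cosh]
  field_simp

theorem continuous_tanh : Continuous tanh :=
  continuous_iff_continuousAt.2 fun x => (hasDerivAt_tanh_s17 x).continuousAt

theorem hasDerivAt_log_cosh (x : ℝ) : HasDerivAt (fun x => log (cosh x)) (tanh x) x := by
  convert (hasDerivAt_cosh x).log (cosh_pos x).ne' using 1
  rw [tanh_eq_sinh_div_cosh]

theorem log_cosh_le_abs (x : ℝ) : log (cosh x) ≤ |x| := by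
  rw [log_le_iff_le_exp (cosh_pos x), ← cosh_abs, ← cosh_add_sinh]
  linarith [sinh_nonneg_iff.2 (abs_nonneg x)]

end Real

namespace ProbabilityTheory

theorem hasDerivAt_gaussianPDFReal (μ : ℝ) (v : ℝ≥0) (x : ℝ) :
    HasDerivAt (gaussianPDFReal μ v) (-(x - μ) / v * gaussianPDFReal μ v x) x := by
  have h : HasDerivAt (fun x => -(x - μ) ^ 2 / (2 * v)) (-(x - μ) / v) x := by
    refine ((((hasDerivAt_id x).sub_const μ).pow 2).neg.div_const (2 * (v : ℝ))).congr_deriv ?_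
    simp only [id]
    ring
  refine (((hasDerivAt_exp _).comp x h).const_mul (√(2 * π * v))⁻¹).congr_deriv ?_
  simp only [gaussianPDFReal]
  ring

theorem integrable_gaussianReal_iff {μ : ℝ} {v : ℝ≥0} (hv : v ≠ 0) {f : ℝ → ℝ} :
    Integrable f (gaussianReal μ v) ↔ Integrable (fun x => gaussianPDFReal μ v x * f x) := by
  rw [gaussianReal_of_var_ne_zero μ hv, integrable_withDensity_iff_integrable_smul'
    (measurable_gaussianPDF μ v) (ae_of_all _ fun _ => gaussianPDF_lt_top)]
  simp only [toReal_gaussianPDF, smul_eq_mul]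

theorem integral_sub_mul_gaussianReal_eq_mul_integral_deriv {μ : ℝ} {v : ℝ≥0} {f f' : ℝ → ℝ}
    (hf : ∀ x, HasDerivAt f (f' x) x) (hf_int : Integrable f (gaussianReal μ v))
    (hf_mul : Integrable (fun x => (x - μ) * f x) (gaussianReal μ v))
    (hf' : Integrable f' (gaussianReal μ v)) :
    ∫ x, (x - μ) * f x ∂gaussianReal μ v = v * ∫ x, f' x ∂gaussianReal μ v := by
  rcases eq_or_ne v 0 with rfl | hv
  · simp
  rw [integrable_gaussianReal_iff hv] at hf_int hf_mul hf'
  have ibp := integral_mul_deriv_eq_deriv_mul_of_integrable (fun x _ => hf x)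
    (fun x _ => hasDerivAt_gaussianPDFReal μ v x)
    ((hf_mul.const_mul (-(v : ℝ)⁻¹)).congr (ae_of_all _ fun x => by simp only [Pi.mul_apply]; ring))
    (hf'.congr (ae_of_all _ fun x => mul_comm _ _))
    (hf_int.congr (ae_of_all _ fun x => mul_comm _ _))
  simp only [integral_gaussianReal_eq_integral_smul hv, smul_eq_mul]
  calc ∫ x, gaussianPDFReal μ v x * ((x - μ) * f x)
      = -v * ∫ x, f x * (-(x - μ) / v * gaussianPDFReal μ v x) := by
        rw [← integral_const_mul]
        congr 1 with x
        field_simp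
    _ = v * ∫ x, gaussianPDFReal μ v x * f' x := by
        rw [ibp, neg_mul_neg]
        simp only [mul_comm (f' _)]

theorem integral_mul_tanh_gaussianReal (v : ℝ≥0) (a b : ℝ) :
    ∫ y, y * tanh (a * y + b) ∂gaussianReal 0 v
      = v * a * (1 - ∫ y, tanh (a * y + b) ^ 2 ∂gaussianReal 0 v) := by
  have hderiv : ∀ y, HasDerivAt (fun y => tanh (a * y + b)) ((1 - tanh (a * y + b) ^ 2) * a) y :=
    fun y => (hasDerivAt_tanh_s17 _).comp y (((hasDerivAt_id y).const_mul a).add_const b |>.congr_deriv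
      (mul_one a))
  have hcont : Continuous fun y => tanh (a * y + b) := continuous_tanh.comp (by fun_prop)
  have hbound : ∀ y, ‖tanh (a * y + b)‖ ≤ 1 := fun y => (abs_tanh_lt_one _).le
  have hint : Integrable (fun y => tanh (a * y + b)) (gaussianReal 0 v) :=
    .of_bound hcont.aestronglyMeasurable 1 (ae_of_all _ hbound)
  have hsq : Integrable (fun y => tanh (a * y + b) ^ 2) (gaussianReal 0 v) :=
    .of_bound (hcont.pow 2).aestronglyMeasurable 1 (ae_of_all _ fun y => by
      rw [norm_pow]; exact pow_le_one₀ (norm_nonneg _) (hbound y))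
  have hid : Integrable id (gaussianReal 0 v) := (memLp_id_gaussianReal 1).integrable le_rfl
  have := integral_sub_mul_gaussianReal_eq_mul_integral_deriv hderiv hint
    (hid.bdd_mul hcont.aestronglyMeasurable (ae_of_all _ hbound) |>.congr
      (ae_of_all _ fun y => by simp [mul_comm])) (((integrable_const 1).sub hsq).mul_const a)
  simp only [sub_zero] at this
  rw [this, integral_mul_const, integral_sub (integrable_const 1) hsq, integral_const]
  simp only [probReal_univ, smul_eq_mul, mul_one]
  ring

end ProbabilityTheory

theorem hasDerivAt_integral_log_cosh {ν : Measure ℝ} [IsFiniteMeasure ν] (hν : Integrable id ν)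
    (b t : ℝ) :
    HasDerivAt (fun t => ∫ y, log (cosh (t * y + b)) ∂ν) (∫ y, y * tanh (t * y + b) ∂ν) t := by
  have hlog_cont : ∀ s, Continuous fun y => log (cosh (s * y + b)) := fun s =>
    (continuous_cosh.comp (by fun_prop)).log fun y => (cosh_pos _).ne'
  have hint : Integrable (fun y => log (cosh (t * y + b))) ν := by
    refine ((hν.norm.const_mul |t|).add (integrable_const |b|)).mono'
      (hlog_cont t).aestronglyMeasurable (ae_of_all _ fun y => ?_)
    rw [norm_of_nonneg (log_nonneg (one_le_cosh _))]
    calc log (cosh (t * y + b)) ≤ |t * y + b| := log_cosh_le_abs _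
      _ ≤ |t| * ‖id y‖ + |b| := by rw [id, norm_eq_abs, ← abs_mul]; exact abs_add_le _ _
  refine (hasDerivAt_integral_of_dominated_loc_of_deriv_le (F := fun s y => log (cosh (s * y + b)))
    (F' := fun s y => y * tanh (s * y + b))
    (bound := fun y => ‖id y‖) univ_mem
    (Eventually.of_forall fun s => (hlog_cont s).aestronglyMeasurable) hint
    (by have := continuous_tanh.comp (f := fun y => t * y + b) (by fun_prop); fun_prop)
    (ae_of_all _ fun y s _ => ?_) hν.norm (ae_of_all _ fun y s _ => ?_)).2
  · rw [norm_mul, id]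
    exact mul_le_of_le_one_right (norm_nonneg y) (abs_tanh_lt_one _).le
  · exact ((hasDerivAt_log_cosh _).comp s (((hasDerivAt_id s).mul_const y).add_const b)).congr_deriv
      (by simp [mul_comm])

theorem stmt_17_general (p : ℕ) (hp : 2 ≤ p) (β h : ℝ) (hh : 0 < h)
    (q : ℝ) (hq : q ∈ Set.Icc (0 : ℝ) 1)
    (hfix : q = ∫ y, Real.tanh (β * Real.sqrt ((p : ℝ) / 2) * q ^ (((p : ℝ) - 1) / 2) * y + h) ^ 2
              ∂(gaussianReal 0 1)) :
    HasDerivAt (fun x : ℝ =>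
      β ^ 2 / 4 * (1 - (p : ℝ) * x ^ (p - 1) + ((p : ℝ) - 1) * x ^ p) + Real.log 2
        + ∫ y, Real.log
            (Real.cosh (β * Real.sqrt ((p : ℝ) / 2) * x ^ (((p : ℝ) - 1) / 2) * y + h))
            ∂(gaussianReal 0 1))
      0 q := by
  obtain ⟨k, rfl⟩ : ∃ k, p = k + 2 := ⟨p - 2, by omega⟩
  set c := β * √(((k + 2 : ℕ) : ℝ) / 2) with hc
  set e := (((k + 2 : ℕ) : ℝ) - 1) / 2 with he
  clear_value c e
  replace he : e = ((k : ℝ) + 1) / 2 := by rw [he]; push_cast; ring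
  -- `x ↦ x ^ e` need not be differentiable at `0`; the fixed point equation and `h ≠ 0` exclude it.
  have hq0 : 0 < q := by
    refine hq.1.lt_of_ne fun hq0 => ?_
    rw [← hq0, zero_rpow (by rw [he]; positivity)] at hfix
    simp only [mul_zero, zero_mul, zero_add, integral_const, probReal_univ, one_smul] at hfix
    exact pow_ne_zero 2 (fun ht => hh.ne' (tanh_injective (ht.trans tanh_zero.symm))) hfix.symm
  have hpoly := ((((hasDerivAt_pow (k + 2 - 1) q).const_mul ((k + 2 : ℕ) : ℝ)).const_sub 1).add
      ((hasDerivAt_pow (k + 2) q).const_mul (((k + 2 : ℕ) : ℝ) - 1))).const_mul (β ^ 2 / 4)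
  have hΦ := (hasDerivAt_integral_log_cosh
    ((memLp_id_gaussianReal (μ := 0) (v := 1) 1).integrable le_rfl) h (c * q ^ e)).comp q
    ((hasDerivAt_rpow_const (p := e) (Or.inl hq0.ne')).const_mul c)
  rw [integral_mul_tanh_gaussianReal, ← hfix] at hΦ
  refine ((hpoly.add_const (log 2)).add hΦ).congr_deriv ?_
  have hcc : c * c = β ^ 2 * (((k : ℝ) + 2) / 2) := by
    rw [hc, mul_mul_mul_comm, mul_self_sqrt (by positivity), sq]
    push_cast
    ring
  have hqq : q ^ e * q ^ (e - 1) = q ^ k := by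
    rw [← rpow_add hq0, ← rpow_natCast, he]
    ring_nf
  rw [show k + 2 - 1 - 1 = k by omega, show k + 2 - 1 = k + 1 by omega]
  push_cast
  linear_combination (e * (q ^ e * q ^ (e - 1)) * (1 - q)) * hcc
    + (β ^ 2 * (((k : ℝ) + 2) / 2) * e * (1 - q)) * hqq
    + (β ^ 2 * (((k : ℝ) + 2) / 2) * q ^ k * (1 - q)) * he

theorem stmt_17 (p : ℕ) (hp : 2 ≤ p) (β h : ℝ) (hβ : 0 < β) (hh : 0 < h)
    (q : ℝ) (hq : q ∈ Set.Icc (0 : ℝ) 1)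
    (hfix : q = ∫ y, Real.tanh (β * Real.sqrt ((p : ℝ) / 2) * q ^ (((p : ℝ) - 1) / 2) * y + h) ^ 2
              ∂(gaussianReal 0 1)) :
    HasDerivAt (fun x : ℝ =>
      β ^ 2 / 4 * (1 - (p : ℝ) * x ^ (p - 1) + ((p : ℝ) - 1) * x ^ p) + Real.log 2
        + ∫ y, Real.log
            (Real.cosh (β * Real.sqrt ((p : ℝ) / 2) * x ^ (((p : ℝ) - 1) / 2) * y + h))
            ∂(gaussianReal 0 1))
      0 q :=
  stmt_17_general p hp β h hh q hq hfix
end
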